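/- Let G = (V, E) be a finite simple graph, ŵ : E → ℝ a weight function with ŵ(e) ≥ 1 for every e ∈ E, Δw : E → ℝ a nonnegative function, and w = ŵ + Δw. Let 0 < ε' ≤ 1/5. Let M be a matching of G with free-vertex set F, let M* be a maximum ŵ-weight matching of G, let y : V → ℝ be nonnegative, let Ω be a finite family of odd-cardinality subsets of V, and let z : Ω → ℝ be nonnegative. Suppose: (i) every B ∈ Ω is full with respect to M, i.e. exactly (|B|−1)/2 edges of M have both endpoints in B; (ii) near domination: yz(e) ≥ w(e) − ε' for every e ∈ E; (iii) near tightness: yz(e) ≤ (1 + 4ε') · w(e) for every e ∈ M; (iv) accumulated free vertex duals: Σ_{f∈F} y(f) ≤ ε' · ŵ(M*); (v) bounded weight change: Σ_{e∈E} Δw(e) ≤ ε' · ŵ(M*). Then ŵ(M) ≥ (1 − 10ε') · ŵ(M*). -/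

import Mathlib

open Finset
open scoped Classical

variable {V : Type*}

/-- `M` is a matching of the simple graph `G`: a set of edges of `G`,
no two of which share an endpoint. -/
def IsMatching (G : SimpleGraph V) (M : Finset (Sym2 V)) : Prop :=
  (M : Set (Sym2 V)) ⊆ G.edgeSet ∧
    ∀ e ∈ M, ∀ f ∈ M, e ≠ f → ∀ v : V, v ∈ e → v ∉ f

/-- The total weight of a finite set of edges. -/
def mWeight (w : Sym2 V → ℝ) (M : Finset (Sym2 V)) : ℝ := ∑ e ∈ M, w e

/-- A vertex is `M`-free if it is not an endpoint of any edge of `M`. -/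
def IsFreeVtx (M : Finset (Sym2 V)) (v : V) : Prop := ∀ e ∈ M, v ∉ e

/-- `yz(e) = y(u) + y(v) + ∑_{B ∈ Ω, u ∈ B, v ∈ B} z(B)` for an edge `e = uv`. -/
noncomputable def yzval (y : V → ℝ) (Ω : Finset (Finset V)) (z : Finset V → ℝ) :
    Sym2 V → ℝ :=
  Sym2.lift ⟨fun u v => y u + y v + ∑ B ∈ Ω, (if u ∈ B ∧ v ∈ B then z B else 0),
    fun u v => by
      have h : ∀ B : Finset V, (u ∈ B ∧ v ∈ B) = (v ∈ B ∧ u ∈ B) :=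
        fun B => propext and_comm
      simp only [h]
      ring⟩

/-- `‖e‖ = (‖u‖ + ‖v‖)/2` for an edge `e = uv`, given vertex weights `‖·‖`. -/
def edgeNorm (nrm : V → ℕ) : Sym2 V → ℕ :=
  Sym2.lift ⟨fun u v => (nrm u + nrm v) / 2, fun u v => by simp [Nat.add_comm]⟩

/-- A walk is alternating (for a path starting at a free vertex): its edges at even
positions are unmatched and its edges at odd positions are matched. -/
def IsAlternating (G : SimpleGraph V) (M : Finset (Sym2 V)) {u v : V}
    (p : G.Walk u v) : Prop :=
  ∀ (i : ℕ) (h : i < p.edges.length), (p.edges.get ⟨i, h⟩ ∈ M ↔ i % 2 = 1)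

/-!
Weak duality with slack: summing `yz` over any matching counts each `y(v)` at most once and,
as `|B|` is odd, each `z(B)` at most `(|B| - 1)/2` times, so it is bounded by the dual objective
`∑ᵥ y(v) + ∑_B z(B) (|B| - 1)/2`. For `M`, whose blossoms are full, the same sum falls short of
the dual objective by exactly the free-vertex duals. Since `ŵ ≥ 1` gives `|M*| ≤ ŵ(M*)`,
`ŵ(M*) ≤ w(M*) ≤ ∑_{M*} yz + ε' ŵ(M*) ≤ ∑_{free} y + ∑_M yz + ε' ŵ(M*)
  ≤ 2ε' ŵ(M*) + (1 + 4ε') (ŵ(M) + ε' ŵ(M*))`,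
and rearranging gives the bound.
-/

lemma card_le_mWeight {w : Sym2 V → ℝ} {N : Finset (Sym2 V)} (hw : ∀ e ∈ N, 1 ≤ w e) :
    (#N : ℝ) ≤ mWeight w N := by
  simpa [mWeight] using Finset.card_nsmul_le_sum N w 1 hw

lemma yzval_eq_of_not_isDiag [DecidableEq V] (y : V → ℝ) (Ω : Finset (Finset V))
    (z : Finset V → ℝ) {e : Sym2 V} (he : ¬e.IsDiag) :
    yzval y Ω z e = ∑ v ∈ e.toFinset, y v + ∑ B ∈ Ω, if ∀ v ∈ e, v ∈ B then z B else 0 := by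
  induction e using Sym2.ind with
  | _ u v =>
    rw [Sym2.mk_isDiag_iff] at he
    simp only [yzval, Sym2.lift_mk, Sym2.toFinset_mk_eq, Finset.sum_pair he, Sym2.ball]
    congr!

noncomputable def dualObjective [Fintype V] (y : V → ℝ) (Ω : Finset (Finset V))
    (z : Finset V → ℝ) : ℝ :=
  ∑ v, y v + ∑ B ∈ Ω, z B * (((#B : ℝ) - 1) / 2)

namespace IsMatching

variable {G : SimpleGraph V} {N : Finset (Sym2 V)}

lemma not_isDiag (hN : IsMatching G N) {e : Sym2 V} (he : e ∈ N) : ¬e.IsDiag :=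
  G.not_isDiag_of_mem_edgeSet (hN.1 he)

variable [DecidableEq V]

lemma pairwiseDisjoint_toFinset (hN : IsMatching G N) :
    (N : Set (Sym2 V)).PairwiseDisjoint Sym2.toFinset := fun e he f hf hef =>
  Finset.disjoint_left.2 fun v hve hvf =>
    hN.2 e he f hf hef v (Sym2.mem_toFinset.1 hve) (Sym2.mem_toFinset.1 hvf)

lemma two_mul_card_filter_subset_le (hN : IsMatching G N) (B : Finset V) :
    2 * #(N.filter fun e => ∀ v ∈ e, v ∈ B) ≤ #B := by
  set K := N.filter fun e => ∀ v ∈ e, v ∈ B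
  have hKN : K ⊆ N := Finset.filter_subset _ _
  calc 2 * #K = ∑ e ∈ K, #e.toFinset := by
        rw [Finset.sum_congr rfl fun e he =>
          Sym2.card_toFinset_of_not_isDiag e (hN.not_isDiag (hKN he)), Finset.sum_const,
          smul_eq_mul, mul_comm]
    _ = #(K.biUnion Sym2.toFinset) :=
        (Finset.card_biUnion (hN.pairwiseDisjoint_toFinset.subset hKN)).symm
    _ ≤ #B := Finset.card_le_card fun v hv => by
        obtain ⟨e, he, hve⟩ := Finset.mem_biUnion.1 hv
        exact (Finset.mem_filter.1 he).2 v (Sym2.mem_toFinset.1 hve)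

lemma card_filter_subset_le_half (hN : IsMatching G N) {B : Finset V} (hB : Odd #B) :
    (#(N.filter fun e => ∀ v ∈ e, v ∈ B) : ℝ) ≤ ((#B : ℝ) - 1) / 2 := by
  have h := hN.two_mul_card_filter_subset_le B
  obtain ⟨m, hm⟩ := hB
  have h' : ((2 * #(N.filter fun e => ∀ v ∈ e, v ∈ B) + 1 : ℕ) : ℝ) ≤ #B := by
    exact_mod_cast (by omega)
  push_cast at h'
  linarith

lemma sum_yzval (hN : IsMatching G N) (y : V → ℝ) (Ω : Finset (Finset V))
    (z : Finset V → ℝ) :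
    ∑ e ∈ N, yzval y Ω z e = ∑ v ∈ N.biUnion Sym2.toFinset, y v +
      ∑ B ∈ Ω, z B * #(N.filter fun e => ∀ v ∈ e, v ∈ B) := by
  rw [Finset.sum_congr rfl fun e he => yzval_eq_of_not_isDiag y Ω z (hN.not_isDiag he),
    Finset.sum_add_distrib, Finset.sum_biUnion hN.pairwiseDisjoint_toFinset]
  congr 1
  rw [Finset.sum_comm]
  refine Finset.sum_congr rfl fun B _ => ?_
  rw [← Finset.sum_filter, Finset.sum_const, nsmul_eq_mul, mul_comm]

variable [Fintype V] {y : V → ℝ} {Ω : Finset (Finset V)} {z : Finset V → ℝ}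

lemma sum_yzval_le_dualObjective (hN : IsMatching G N) (hy : ∀ v, 0 ≤ y v)
    (hodd : ∀ B ∈ Ω, Odd #B) (hz : ∀ B ∈ Ω, 0 ≤ z B) :
    ∑ e ∈ N, yzval y Ω z e ≤ dualObjective y Ω z := by
  rw [hN.sum_yzval, dualObjective]
  refine add_le_add ?_ (Finset.sum_le_sum fun B hB => ?_)
  · exact Finset.sum_le_sum_of_subset_of_nonneg (Finset.subset_univ _) fun v _ _ => hy v
  · exact mul_le_mul_of_nonneg_left (hN.card_filter_subset_le_half (hodd B hB)) (hz B hB)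

lemma dualObjective_eq_of_full (hN : IsMatching G N)
    (hfull : ∀ B ∈ Ω, 2 * #(N.filter fun e => ∀ v ∈ e, v ∈ B) + 1 = #B) :
    dualObjective y Ω z = ∑ v ∈ Finset.univ.filter (IsFreeVtx N), y v +
      ∑ e ∈ N, yzval y Ω z e := by
  have hcovered : Finset.univ.filter (fun v => ¬IsFreeVtx N v) = N.biUnion Sym2.toFinset := by
    ext v
    simp [IsFreeVtx]
  have hcount : ∀ B ∈ Ω, (#(N.filter fun e => ∀ v ∈ e, v ∈ B) : ℝ) = ((#B : ℝ) - 1) / 2 := by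
    intro B hB
    have h : ((2 * #(N.filter fun e => ∀ v ∈ e, v ∈ B) + 1 : ℕ) : ℝ) = #B := by
      rw [hfull B hB]
    push_cast at h
    linarith
  rw [dualObjective, hN.sum_yzval, ← hcovered,
    ← Finset.sum_filter_add_sum_filter_not Finset.univ (IsFreeVtx N) y, add_assoc]
  congr 2
  refine Finset.sum_congr rfl fun B hB => ?_
  -- `hcount` decides membership through `Fintype V`, `sum_yzval` does not
  convert congrArg (z B * ·) (hcount B hB).symm

end IsMatching

theorem mwm_relaxed_slackness_certificate_general
    [Fintype V] [DecidableEq V]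
    (G : SimpleGraph V) [DecidableRel G.Adj]
    (what dw : Sym2 V → ℝ)
    (hwhat : ∀ e ∈ G.edgeFinset, 1 ≤ what e)
    (hdw : ∀ e ∈ G.edgeFinset, 0 ≤ dw e)
    (w : Sym2 V → ℝ) (hw : ∀ e : Sym2 V, w e = what e + dw e)
    (ε' : ℝ) (hε0 : 0 < ε')
    (M Mstar : Finset (Sym2 V))
    (hM : IsMatching G M)
    (hMstar : IsMatching G Mstar)
    (y : V → ℝ) (hy : ∀ v : V, 0 ≤ y v)
    (Ω : Finset (Finset V)) (hodd : ∀ B ∈ Ω, Odd B.card)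
    (z : Finset V → ℝ) (hz : ∀ B ∈ Ω, 0 ≤ z B)
    -- (i) every `B ∈ Ω` is full with respect to `M`
    (hfull : ∀ B ∈ Ω, 2 * (M.filter (fun e => ∀ v ∈ e, v ∈ B)).card + 1 = B.card)
    -- (ii) near domination
    (hdom : ∀ e ∈ G.edgeFinset, w e - ε' ≤ yzval y Ω z e)
    -- (iii) near tightness
    (htight : ∀ e ∈ M, yzval y Ω z e ≤ (1 + 4 * ε') * w e)
    -- (iv) accumulated free vertex duals
    (hfree : ∑ f ∈ Finset.univ.filter (fun v : V => IsFreeVtx M v), y f ≤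
      ε' * mWeight what Mstar)
    -- (v) bounded weight change
    (hbounded : ∑ e ∈ G.edgeFinset, dw e ≤ ε' * mWeight what Mstar) :
    (1 - 10 * ε') * mWeight what Mstar ≤ mWeight what M := by
  have hMG : M ⊆ G.edgeFinset := fun e he => SimpleGraph.mem_edgeFinset.2 (hM.1 he)
  have hMstarG : Mstar ⊆ G.edgeFinset := fun e he => SimpleGraph.mem_edgeFinset.2 (hMstar.1 he)
  set W := mWeight what Mstar
  have hcard : (#Mstar : ℝ) ≤ W := card_le_mWeight fun e he => hwhat e (hMstarG he)
  have hW : 0 ≤ W := (Nat.cast_nonneg _).trans hcard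
  have hdwM : ∑ e ∈ M, dw e ≤ ε' * W :=
    (Finset.sum_le_sum_of_subset_of_nonneg hMG fun e he _ => hdw e he).trans hbounded
  have hMstar_le : W ≤ ∑ e ∈ Mstar, yzval y Ω z e + ε' * W := calc
    W ≤ ∑ e ∈ Mstar, w e := Finset.sum_le_sum fun e he => by
          linarith [hw e, hdw e (hMstarG he)]
    _ ≤ ∑ e ∈ Mstar, (yzval y Ω z e + ε') := Finset.sum_le_sum fun e he => by
          linarith [hdom e (hMstarG he)]
    _ ≤ ∑ e ∈ Mstar, yzval y Ω z e + ε' * W := by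
          rw [Finset.sum_add_distrib, Finset.sum_const, nsmul_eq_mul, mul_comm]
          gcongr
  have hM_le : ∑ e ∈ M, yzval y Ω z e ≤ (1 + 4 * ε') * (mWeight what M + ε' * W) := calc
    _ ≤ ∑ e ∈ M, (1 + 4 * ε') * w e := Finset.sum_le_sum htight
    _ = (1 + 4 * ε') * (mWeight what M + ∑ e ∈ M, dw e) := by
          simp only [← Finset.mul_sum, mWeight, ← Finset.sum_add_distrib, hw]
    _ ≤ _ := by gcongr
  have hduality := hMstar.sum_yzval_le_dualObjective hy hodd hz
  rw [hM.dualObjective_eq_of_full hfull] at hduality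
  have hchain : W ≤ 2 * ε' * W + (1 + 4 * ε') * (mWeight what M + ε' * W) := by linarith
  have key : (1 + 4 * ε') * ((1 - 10 * ε') * W) ≤ (1 + 4 * ε') * mWeight what M := by
    nlinarith [mul_nonneg hε0.le hW, mul_nonneg (mul_nonneg hε0.le hε0.le) hW]
  exact le_of_mul_le_mul_left key (by positivity)

/-- Relaxed complementary slackness certification: if the matching `M`,
duals `y, z` on the full blossoms `Ω`, and weight modifiers `Δw` satisfy near domination,
near tightness, accumulated free vertex duals, and bounded weight change with parameter
`0 < ε' ≤ 1/5`, then `ŵ(M) ≥ (1 − 10ε') · ŵ(M*)` for a maximum `ŵ`-weight matching `M*`. -/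
theorem mwm_relaxed_slackness_certificate
    [Fintype V] [DecidableEq V]
    (G : SimpleGraph V) [DecidableRel G.Adj]
    (what dw : Sym2 V → ℝ)
    (hwhat : ∀ e ∈ G.edgeFinset, 1 ≤ what e)
    (hdw : ∀ e ∈ G.edgeFinset, 0 ≤ dw e)
    (w : Sym2 V → ℝ) (hw : ∀ e : Sym2 V, w e = what e + dw e)
    (ε' : ℝ) (hε0 : 0 < ε') (hε1 : ε' ≤ 1 / 5)
    (M Mstar : Finset (Sym2 V))
    (hM : IsMatching G M)
    (hMstar : IsMatching G Mstar)
    (hMstarMax : ∀ N : Finset (Sym2 V), IsMatching G N →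
      mWeight what N ≤ mWeight what Mstar)
    (y : V → ℝ) (hy : ∀ v : V, 0 ≤ y v)
    (Ω : Finset (Finset V)) (hodd : ∀ B ∈ Ω, Odd B.card)
    (z : Finset V → ℝ) (hz : ∀ B ∈ Ω, 0 ≤ z B)
    -- (i) every `B ∈ Ω` is full with respect to `M`
    (hfull : ∀ B ∈ Ω, 2 * (M.filter (fun e => ∀ v ∈ e, v ∈ B)).card + 1 = B.card)
    -- (ii) near domination
    (hdom : ∀ e ∈ G.edgeFinset, w e - ε' ≤ yzval y Ω z e)
    -- (iii) near tightness
    (htight : ∀ e ∈ M, yzval y Ω z e ≤ (1 + 4 * ε') * w e)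
    -- (iv) accumulated free vertex duals
    (hfree : ∑ f ∈ Finset.univ.filter (fun v : V => IsFreeVtx M v), y f ≤
      ε' * mWeight what Mstar)
    -- (v) bounded weight change
    (hbounded : ∑ e ∈ G.edgeFinset, dw e ≤ ε' * mWeight what Mstar) :
    (1 - 10 * ε') * mWeight what Mstar ≤ mWeight what M :=
  mwm_relaxed_slackness_certificate_general G what dw hwhat hdw w hw ε' hε0 M Mstar hM hMstar y hy Ω
    hodd z hz hfull hdom htight hfree hbounded
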